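/- (Truncation for χ²) For all x, y ∈ (0,1], every ε ∈ (0,1], and every t ≥ ln(3/ε): f_χ(x,y) ≥ ∫_{−t}^{t} h(x,y,ω)·κ_χ(ω) dω ≥ f_χ(x,y) − ε. -/

import Mathlib

open Real MeasureTheory

/-- The kernel integrand `h(x,y,ω)`. -/
noncomputable def h (x y ω : ℝ) : ℝ :=
  (Real.sqrt x * Real.cos (ω * Real.log x) - Real.sqrt y * Real.cos (ω * Real.log y)) ^ 2 +
  (Real.sqrt x * Real.sin (ω * Real.log x) - Real.sqrt y * Real.sin (ω * Real.log y)) ^ 2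

/-- Hyperbolic secant. -/
noncomputable def sech (t : ℝ) : ℝ := 2 / (Real.exp t + Real.exp (-t))

/-- The JS kernel density `κ(ω)`. -/
noncomputable def kJ (ω : ℝ) : ℝ := 2 * sech (Real.pi * ω) / (Real.log 4 * (1 + 4 * ω ^ 2))

/-- The χ² kernel density `κ_χ(ω)`. -/
noncomputable def kChi (ω : ℝ) : ℝ := sech (Real.pi * ω)

/-- One-dimensional Jensen–Shannon divergence (with `0·log 0 = 0`, `f_J(0,0) = 0`,
which hold automatically since `Real.log 0 = 0` and `0/0 = 0` in Lean). -/
noncomputable def fJ (x y : ℝ) : ℝ :=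
  x * Real.log (2 * x / (x + y)) + y * Real.log (2 * y / (x + y))

/-- One-dimensional symmetrized χ² divergence (with `f_χ(0,0) = 0`,
which holds automatically since `0/0 = 0` in Lean). -/
noncomputable def fChi (x y : ℝ) : ℝ := (x - y) ^ 2 / (x + y)

/-- One-dimensional Hellinger distance. -/
noncomputable def fH (x y : ℝ) : ℝ := (Real.sqrt x - Real.sqrt y) ^ 2

/-!
Since `h x y ω = x + y - 2 √x √y cos (ω (log x - log y))`, the full integral of `h · κ_χ` follows
from the Fourier transform `∫ e^{iaω} sech (πω) dω = sech (a/2)`. That transform is the reflection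
formula `Γ(s) Γ(1-s) = π / sin (πs)` at `s = 1/2 + ia/(2π)`, after the logistic substitution
`t = σ(u)` turns `B(s, 1-s)` into `∫ e^{su} / (1 + e^u) du`; it yields `∫ h κ_χ = f_χ(x,y)`.
The integrand is nonnegative and even, so the truncated integral is `f_χ(x,y)` minus twice the
tail beyond `t`, and that tail is at most `8/π · e^{-πt}` because `h ≤ 4` and
`sech (πω) ≤ 2 e^{-πω}`.
-/

open Set

lemma sech_eq_inv_cosh (t : ℝ) : sech t = (cosh t)⁻¹ := by
  rw [sech, cosh_eq, inv_div]

lemma sech_pos (t : ℝ) : 0 < sech t := by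
  rw [sech_eq_inv_cosh]
  exact inv_pos.2 (cosh_pos t)

lemma sech_neg (t : ℝ) : sech (-t) = sech t := by
  rw [sech_eq_inv_cosh, sech_eq_inv_cosh, cosh_neg]

lemma continuous_sech : Continuous sech := by
  simp_rw [funext sech_eq_inv_cosh]
  exact continuous_cosh.inv₀ fun t => (cosh_pos t).ne'

lemma sech_le_two_mul_exp_neg_abs (t : ℝ) : sech t ≤ 2 * exp (-|t|) := by
  rw [sech, exp_neg |t|, ← div_eq_mul_inv]
  refine div_le_div_of_nonneg_left zero_le_two (exp_pos _) ?_
  rcases abs_choice t with h | h <;> rw [h] <;> linarith [exp_pos t, exp_pos (-t)]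

lemma sech_le_two_mul_exp_neg (t : ℝ) : sech t ≤ 2 * exp (-t) :=
  (sech_le_two_mul_exp_neg_abs t).trans <| by gcongr; exact le_abs_self t

lemma integrable_exp_neg_abs : Integrable fun x : ℝ => exp (-|x|) := by
  rw [← integrableOn_univ, ← Iic_union_Ioi (a := 0)]
  refine IntegrableOn.union
    ((integrableOn_exp_Iic 0).congr_fun (fun x hx => ?_) measurableSet_Iic)
    ((integrableOn_exp_neg_Ioi 0).congr_fun (fun x hx => ?_) measurableSet_Ioi)
  · rw [abs_of_nonpos hx, neg_neg]
  · rw [abs_of_pos hx]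

lemma integrable_sech : Integrable sech :=
  (integrable_exp_neg_abs.const_mul 2).mono' continuous_sech.aestronglyMeasurable
    (ae_of_all _ fun t => by
      rw [norm_of_nonneg (sech_pos t).le]
      exact sech_le_two_mul_exp_neg_abs t)

lemma integrable_sech_pi_mul : Integrable fun ω : ℝ => sech (π * ω) :=
  integrable_sech.comp_mul_left' pi_ne_zero

theorem integral_cexp_mul_div_one_add_exp {s : ℂ} (hs0 : 0 < s.re) (hs1 : s.re < 1) :
    ∫ u : ℝ, Complex.exp (s * u) / (1 + exp u) = π / Complex.sin (π * s) := by
  have hB : Complex.Gamma s * Complex.Gamma (1 - s) = Complex.betaIntegral s (1 - s) := by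
    rw [Complex.Gamma_mul_Gamma_eq_betaIntegral hs0 (by simpa using hs1), add_sub_cancel,
      Complex.Gamma_one, one_mul]
  rw [← Complex.Gamma_mul_Gamma_one_sub, hB, Complex.betaIntegral,
    intervalIntegral.integral_of_le zero_le_one, integral_Ioc_eq_integral_Ioo,
    ← range_sigmoid, ← image_univ,
    integral_image_eq_integral_abs_deriv_smul MeasurableSet.univ
      (fun u _ => (hasDerivAt_sigmoid u).hasDerivWithinAt) sigmoid_injective.injOn,
    Measure.restrict_univ]
  congr 1 with u
  set p := sigmoid u
  have hp : 0 < p := sigmoid_pos u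
  have hq : 0 < 1 - p := sub_pos.2 (sigmoid_lt_one u)
  have hpq : p * exp (-u) = 1 - p := by rw [sigmoid_mul_rexp_neg, sigmoid_neg]
  have hlog : log p = u + log (1 - p) := by
    rw [← hpq, log_mul hp.ne' (exp_pos _).ne', log_exp]; ring
  have hweight : p * (1 - p) * exp (-u - log (1 - p)) = (1 + exp u)⁻¹ := by
    rw [exp_sub, exp_log hq, mul_assoc, mul_div_cancel₀ _ hq.ne', hpq, ← sigmoid_neg,
      sigmoid_def, neg_neg]
  rw [show (1 : ℂ) - p = ((1 - p : ℝ) : ℂ) by push_cast; ring,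
    Complex.cpow_def_of_ne_zero (by exact_mod_cast hp.ne'),
    Complex.cpow_def_of_ne_zero (by exact_mod_cast hq.ne'), ← Complex.ofReal_log hp.le,
    ← Complex.ofReal_log hq.le, hlog, abs_of_pos (mul_pos hp hq), ← Complex.exp_add,
    show ((u + log (1 - p) : ℝ) : ℂ) * (s - 1) + log (1 - p) * (1 - s - 1)
      = s * u + ((-u - log (1 - p) : ℝ) : ℂ) by push_cast; ring,
    Complex.exp_add, ← Complex.ofReal_exp, Complex.real_smul, mul_left_comm,
    ← Complex.ofReal_mul, hweight]
  push_cast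
  ring

theorem integral_cexp_mul_I_mul_sech_pi_mul (a : ℝ) :
    ∫ ω : ℝ, Complex.exp (a * ω * Complex.I) * sech (π * ω) = sech (a / 2) := by
  set s : ℂ := 1 / 2 + (a / (2 * π) : ℝ) * Complex.I
  have hs : s.re = 1 / 2 := by simp [s, Complex.div_im]
  have hsin : Complex.sin (π * s) = cosh (a / 2) := by
    rw [show (π : ℂ) * s = π / 2 + (a / 2 : ℝ) * Complex.I by simp only [s]; push_cast; field_simp,
      Complex.sin_add, Complex.sin_pi_div_two, Complex.cos_pi_div_two, Complex.cos_mul_I,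
      Complex.ofReal_cosh]
    ring
  have hpoint : ∀ ω : ℝ, Complex.exp (a * ω * Complex.I) * sech (π * ω)
      = 2 * (Complex.exp (s * ↑(2 * π * ω)) / (1 + exp (2 * π * ω))) := by
    intro ω
    have hexponent : s * ↑(2 * π * ω) = ↑(π * ω) + a * ω * Complex.I := by
      simp only [s]; push_cast; field_simp
    have hsech : sech (π * ω) = 2 * exp (π * ω) / (1 + exp (2 * π * ω)) := by
      rw [sech, exp_neg, mul_assoc, two_mul (π * ω), exp_add]
      field_simp
      ring
    rw [hexponent, Complex.exp_add, ← Complex.ofReal_exp, hsech]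
    push_cast
    ring
  simp_rw [hpoint, integral_const_mul]
  rw [Measure.integral_comp_mul_left (fun u : ℝ => Complex.exp (s * u) / (1 + exp u)) (2 * π),
    integral_cexp_mul_div_one_add_exp (by rw [hs]; norm_num) (by rw [hs]; norm_num), hsin,
    sech_eq_inv_cosh, abs_of_pos (inv_pos.2 (by positivity : (0 : ℝ) < 2 * π)), Complex.real_smul]
  push_cast
  field_simp

lemma integrable_cexp_mul_I_mul_sech_pi_mul (a : ℝ) :
    Integrable fun ω : ℝ => Complex.exp (a * ω * Complex.I) * sech (π * ω) :=
  integrable_sech_pi_mul.mono'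
    (by have := continuous_sech; fun_prop : Continuous fun ω : ℝ =>
      Complex.exp (a * ω * Complex.I) * sech (π * ω)).aestronglyMeasurable
    (ae_of_all _ fun ω => by
      rw [norm_mul, Complex.norm_real, norm_of_nonneg (sech_pos _).le,
        show (a : ℂ) * ω * Complex.I = (a * ω : ℝ) * Complex.I by push_cast; ring,
        Complex.norm_exp_ofReal_mul_I, one_mul])

lemma re_cexp_mul_I_mul_sech (a ω : ℝ) :
    (Complex.exp (a * ω * Complex.I) * sech (π * ω)).re = cos (a * ω) * sech (π * ω) := by
  rw [Complex.re_mul_ofReal, ← Complex.ofReal_mul, Complex.exp_ofReal_mul_I_re]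

lemma integrable_cos_mul_mul_sech_pi_mul (a : ℝ) :
    Integrable fun ω : ℝ => cos (a * ω) * sech (π * ω) := by
  simpa only [RCLike.re_to_complex, re_cexp_mul_I_mul_sech] using
    (integrable_cexp_mul_I_mul_sech_pi_mul a).re

theorem integral_cos_mul_mul_sech_pi_mul (a : ℝ) :
    ∫ ω : ℝ, cos (a * ω) * sech (π * ω) = sech (a / 2) := by
  simpa only [RCLike.re_to_complex, integral_cexp_mul_I_mul_sech_pi_mul, Complex.ofReal_re,
    re_cexp_mul_I_mul_sech] using integral_re (integrable_cexp_mul_I_mul_sech_pi_mul a)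

theorem integral_sech_pi_mul : ∫ ω : ℝ, sech (π * ω) = 1 := by
  have h0 := integral_cos_mul_mul_sech_pi_mul 0
  simp only [zero_mul, cos_zero, one_mul, zero_div] at h0
  rw [h0, sech]
  norm_num

theorem intervalIntegral_eq_integral_sub_two_smul_of_even {E : Type*} [NormedAddCommGroup E]
    [NormedSpace ℝ E] {g : ℝ → E} (hg : Integrable g) (heven : ∀ x, g (-x) = g x) (t : ℝ) :
    ∫ x in -t..t, g x = (∫ x, g x) - (2 : ℝ) • ∫ x in Ioi t, g x := by
  have hleft : ∫ x in Iic (-t), g x = ∫ x in Ioi t, g x := by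
    simp_rw [← integral_comp_neg_Ioi, heven]
  rw [← intervalIntegral.integral_Iic_sub_Iic hg.integrableOn hg.integrableOn,
    ← intervalIntegral.integral_Iic_add_Ioi hg.integrableOn hg.integrableOn (b := t), hleft,
    two_smul]
  abel

lemma h_eq_add_sub_cos {x y : ℝ} (hx : 0 ≤ x) (hy : 0 ≤ y) (ω : ℝ) :
    h x y ω = x + y - 2 * (√x * √y) * cos ((log x - log y) * ω) := by
  rw [h, sub_mul, cos_sub, mul_comm (log x), mul_comm (log y)]
  linear_combination (√x) ^ 2 * sin_sq_add_cos_sq (ω * log x)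
    + (√y) ^ 2 * sin_sq_add_cos_sq (ω * log y) + sq_sqrt hx + sq_sqrt hy

lemma h_neg (x y ω : ℝ) : h x y (-ω) = h x y ω := by
  simp only [h, neg_mul, cos_neg, sin_neg]
  ring

lemma h_nonneg (x y ω : ℝ) : 0 ≤ h x y ω := by
  rw [h]; positivity

lemma h_le_sq_sqrt_add_sqrt {x y : ℝ} (hx : 0 ≤ x) (hy : 0 ≤ y) (ω : ℝ) :
    h x y ω ≤ (√x + √y) ^ 2 := by
  rw [h_eq_add_sub_cos hx hy, add_sq, sq_sqrt hx, sq_sqrt hy]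
  nlinarith [neg_one_le_cos ((log x - log y) * ω), mul_nonneg (sqrt_nonneg x) (sqrt_nonneg y)]

lemma h_mul_kChi_eq {x y : ℝ} (hx : 0 ≤ x) (hy : 0 ≤ y) :
    (fun ω => h x y ω * kChi ω) = fun ω => (x + y) * sech (π * ω)
      - 2 * (√x * √y) * (cos ((log x - log y) * ω) * sech (π * ω)) := by
  ext ω
  rw [kChi, h_eq_add_sub_cos hx hy]
  ring

lemma integrable_h_mul_kChi {x y : ℝ} (hx : 0 ≤ x) (hy : 0 ≤ y) :
    Integrable fun ω => h x y ω * kChi ω := by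
  rw [h_mul_kChi_eq hx hy]
  exact (integrable_sech_pi_mul.const_mul _).sub
    ((integrable_cos_mul_mul_sech_pi_mul _).const_mul _)

lemma sqrt_mul_sqrt_mul_sech_half_log_sub {x y : ℝ} (hx : 0 < x) (hy : 0 < y) :
    √x * √y * sech ((log x - log y) / 2) = 2 * x * y / (x + y) := by
  have hsqrt : ∀ {z : ℝ}, 0 < z → √z = exp (log z / 2) := fun hz => by
    rw [sqrt_eq_rpow, rpow_def_of_pos hz, one_div, div_eq_mul_inv]
  have hx' := sqrt_pos.2 hx
  have hy' := sqrt_pos.2 hy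
  rw [sech, sub_div, exp_sub, neg_sub, exp_sub, ← hsqrt hx, ← hsqrt hy]
  conv_rhs => rw [← sq_sqrt hx.le, ← sq_sqrt hy.le]
  field_simp

theorem integral_h_mul_kChi {x y : ℝ} (hx : 0 < x) (hy : 0 < y) :
    ∫ ω, h x y ω * kChi ω = fChi x y := by
  rw [h_mul_kChi_eq hx.le hy.le, integral_sub (integrable_sech_pi_mul.const_mul _)
    ((integrable_cos_mul_mul_sech_pi_mul _).const_mul _), integral_const_mul, integral_const_mul,
    integral_sech_pi_mul, integral_cos_mul_mul_sech_pi_mul, mul_assoc 2,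
    sqrt_mul_sqrt_mul_sech_half_log_sub hx hy, fChi]
  field_simp
  ring

lemma h_mul_kChi_le {x y : ℝ} (hx : 0 ≤ x) (hy : 0 ≤ y) (ω : ℝ) :
    h x y ω * kChi ω ≤ 2 * (√x + √y) ^ 2 * exp (-π * ω) := by
  rw [mul_comm 2, mul_assoc, neg_mul]
  exact mul_le_mul (h_le_sq_sqrt_add_sqrt hx hy ω) (sech_le_two_mul_exp_neg _)
    (sech_pos _).le (sq_nonneg _)

theorem setIntegral_Ioi_h_mul_kChi_le {x y : ℝ} (hx : 0 ≤ x) (hy : 0 ≤ y) (t : ℝ) :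
    ∫ ω in Ioi t, h x y ω * kChi ω ≤ 2 * (√x + √y) ^ 2 / π * exp (-π * t) :=
  calc ∫ ω in Ioi t, h x y ω * kChi ω
      ≤ ∫ ω in Ioi t, 2 * (√x + √y) ^ 2 * exp (-π * ω) :=
        setIntegral_mono_on (integrable_h_mul_kChi hx hy).integrableOn
          ((integrableOn_exp_mul_Ioi (neg_neg_of_pos pi_pos) t).const_mul _) measurableSet_Ioi
          fun ω _ => h_mul_kChi_le hx hy ω
    _ = 2 * (√x + √y) ^ 2 / π * exp (-π * t) := by
        rw [integral_const_mul, integral_exp_mul_Ioi (neg_neg_of_pos pi_pos)]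
        field_simp

/-- Truncation for χ². -/
theorem chiSq_truncation :
    ∀ x ∈ Set.Ioc (0 : ℝ) 1, ∀ y ∈ Set.Ioc (0 : ℝ) 1, ∀ ε ∈ Set.Ioc (0 : ℝ) 1,
      ∀ t : ℝ, Real.log (3 / ε) ≤ t →
        fChi x y ≥ (∫ ω in (-t)..t, h x y ω * kChi ω) ∧
        (∫ ω in (-t)..t, h x y ω * kChi ω) ≥ fChi x y - ε := by
  rintro x ⟨hx0, hx1⟩ y ⟨hy0, hy1⟩ ε ⟨hε0, hε1⟩ t ht
  have hsplit := intervalIntegral_eq_integral_sub_two_smul_of_even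
    (integrable_h_mul_kChi hx0.le hy0.le) (fun ω => by rw [h_neg, kChi, kChi, mul_neg, sech_neg]) t
  rw [integral_h_mul_kChi hx0 hy0, smul_eq_mul] at hsplit
  have htail_nonneg : 0 ≤ ∫ ω in Ioi t, h x y ω * kChi ω :=
    setIntegral_nonneg measurableSet_Ioi fun ω _ =>
      mul_nonneg (h_nonneg x y ω) (sech_pos _).le
  have htail := setIntegral_Ioi_h_mul_kChi_le hx0.le hy0.le t
  have hsqrt : (√x + √y) ^ 2 ≤ 4 := by
    nlinarith [sqrt_le_one.2 hx1, sqrt_le_one.2 hy1, sqrt_nonneg x, sqrt_nonneg y]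
  have ht0 : 0 ≤ t := (log_nonneg (by rw [le_div_iff₀ hε0]; linarith)).trans ht
  have hexp : exp (-π * t) ≤ (ε / 3) ^ 2 :=
    calc exp (-π * t) ≤ exp (-t) ^ 2 := by
          rw [← exp_nat_mul]; exact exp_le_exp.2 (by push_cast; nlinarith [pi_gt_three])
      _ ≤ exp (-log (3 / ε)) ^ 2 := by gcongr
      _ = (ε / 3) ^ 2 := by rw [exp_neg, exp_log (by positivity), inv_div]
  refine ⟨by linarith, ?_⟩
  have htail_le : 2 * (2 * (√x + √y) ^ 2 / π * exp (-π * t)) ≤ ε :=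
    calc 2 * (2 * (√x + √y) ^ 2 / π * exp (-π * t)) ≤ 2 * (2 * 4 / 3 * (ε / 3) ^ 2) := by
          gcongr; exact pi_gt_three.le
      _ ≤ ε := by nlinarith
  linarith
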